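/- Let P be row-stochastic on finite S with a closed set R ⊆ S and transient part T = S \ R, and suppose ∑_{n=0}^∞ (P^n)_{t,t'} ≤ N for all t,t' ∈ T (boundedness of expected visits to transient states). Let W ∈ ℝ^S with W(t) ≥ w_B for all t ∈ T, where w_B < 0, and W(r) ≥ 0 for all r ∈ R. Then for every t ∈ T and every γ ∈ (0,1), the discounted utility satisfies U(t) ≥ |T| · N · w_B. -/

import Mathlib

/-!
Each term `γⁿ (Pⁿ W) t` is at least `w_B` times the mass that `Pⁿ t ·` puts on the transient
states: the mass on `R` meets nonnegative rewards, and a discount `γⁿ ≤ 1` can only raise a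
nonpositive bound. Summed over `n`, that transient mass is at most `|T| N` by the visit bound.
-/

open Matrix Finset

lemma le_dotProduct_of_le_on_of_nonneg_off {S : Type*} [Fintype S] (T : Finset S)
    {p W : S → ℝ} {c : ℝ} (hp : ∀ s, 0 ≤ p s) (hWT : ∀ s ∈ T, c ≤ W s)
    (hW : ∀ s ∉ T, 0 ≤ W s) :
    c * ∑ s ∈ T, p s ≤ p ⬝ᵥ W :=
  calc c * ∑ s ∈ T, p s = ∑ s ∈ T, p s * c := by rw [mul_sum]; simp only [mul_comm]
    _ ≤ ∑ s ∈ T, p s * W s :=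
        sum_le_sum fun s hs => mul_le_mul_of_nonneg_left (hWT s hs) (hp s)
    _ ≤ ∑ s, p s * W s := sum_le_sum_of_subset_of_nonneg (subset_univ T)
        fun s _ hs => mul_nonneg (hp s) (hW s hs)

lemma sum_range_sum_le_card_mul {ι : Type*} (T : Finset ι) (f : ℕ → ι → ℝ) {N : ℝ}
    (hN : ∀ s ∈ T, ∀ m, ∑ n ∈ range m, f n s ≤ N) (m : ℕ) :
    ∑ n ∈ range m, ∑ s ∈ T, f n s ≤ #T * N := by
  rw [sum_comm]
  calc ∑ s ∈ T, ∑ n ∈ range m, f n s ≤ ∑ _s ∈ T, N := sum_le_sum fun s hs => hN s hs m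
    _ = #T * N := by rw [sum_const, nsmul_eq_mul]

section RowStochastic

variable {S : Type*} [Fintype S] [DecidableEq S]

lemma abs_mulVec_le_sum_abs_of_mem_rowStochastic {M : Matrix S S ℝ}
    (hM : M ∈ rowStochastic ℝ S) (W : S → ℝ) (i : S) :
    |(M *ᵥ W) i| ≤ ∑ s, |W s| :=
  calc |∑ s, M i s * W s| ≤ ∑ s, |M i s * W s| := abs_sum_le_sum_abs _ _
    _ ≤ ∑ s, |W s| := sum_le_sum fun s _ => by
        rw [abs_mul, abs_of_nonneg (nonneg_of_mem_rowStochastic hM)]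
        exact mul_le_of_le_one_left (abs_nonneg _) (le_one_of_mem_rowStochastic hM)

lemma summable_geometric_mul_pow_mulVec_of_mem_rowStochastic {P : Matrix S S ℝ}
    (hP : P ∈ rowStochastic ℝ S) (W : S → ℝ) (i : S) {γ : ℝ} (hγ0 : 0 ≤ γ) (hγ1 : γ < 1) :
    Summable fun n : ℕ => γ ^ n * ((P ^ n) *ᵥ W) i := by
  refine .of_norm_bounded
    ((summable_geometric_of_lt_one hγ0 hγ1).mul_right (∑ s, |W s|)) fun n => ?_
  rw [Real.norm_eq_abs, abs_mul, abs_pow, abs_of_nonneg hγ0]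
  exact mul_le_mul_of_nonneg_left
    (abs_mulVec_le_sum_abs_of_mem_rowStochastic (pow_mem hP n) W i) (by positivity)

end RowStochastic

theorem transient_utility_lower_bound_general {S : Type*} [Fintype S] [DecidableEq S]
    (P : Matrix S S ℝ)
    (hnn : ∀ i j, 0 ≤ P i j) (hrow : ∀ i, ∑ j, P i j = 1)
    (R : Finset S)
    (N : ℝ)
    (hvisit : ∀ t ∉ R, ∀ t' ∉ R, ∀ m : ℕ, ∑ n ∈ Finset.range m, (P ^ n) t t' ≤ N)
    (W : S → ℝ) (wB : ℝ) (hwB : wB < 0)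
    (hWT : ∀ t ∉ R, wB ≤ W t) (hWR : ∀ r ∈ R, 0 ≤ W r) :
    ∀ t ∉ R, ∀ γ : ℝ, 0 < γ → γ < 1 →
      ((Rᶜ : Finset S).card : ℝ) * N * wB ≤ ∑' n : ℕ, γ ^ n * ((P ^ n).mulVec W) t := by
  intro t ht γ hγ0 hγ1
  have hP : P ∈ rowStochastic ℝ S := mem_rowStochastic_iff_sum.2 ⟨hnn, hrow⟩
  set transientMass : ℕ → ℝ := fun n => ∑ t' ∈ Rᶜ, (P ^ n) t t'
  have hmass_nonneg n : 0 ≤ transientMass n :=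
    sum_nonneg fun _ _ => nonneg_of_mem_rowStochastic (pow_mem hP n)
  have hmass_partial : ∀ m, ∑ n ∈ range m, transientMass n ≤ #Rᶜ * N :=
    sum_range_sum_le_card_mul _ _ fun t' ht' => hvisit t ht t' (mem_compl.1 ht')
  have hpointwise n : wB * transientMass n ≤ γ ^ n * ((P ^ n) *ᵥ W) t := by
    have hlower : wB * transientMass n ≤ ((P ^ n) *ᵥ W) t :=
      le_dotProduct_of_le_on_of_nonneg_off Rᶜ
        (fun _ => nonneg_of_mem_rowStochastic (pow_mem hP n))
        (fun s hs => hWT s (mem_compl.1 hs)) fun s hs => hWR s (notMem_compl.1 hs)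
    have hnonpos : wB * transientMass n ≤ 0 :=
      mul_nonpos_of_nonpos_of_nonneg hwB.le (hmass_nonneg n)
    calc wB * transientMass n ≤ γ ^ n * (wB * transientMass n) :=
          le_mul_of_le_one_left hnonpos (pow_le_one₀ hγ0.le hγ1.le)
      _ ≤ γ ^ n * ((P ^ n) *ᵥ W) t := mul_le_mul_of_nonneg_left hlower (by positivity)
  calc (#Rᶜ : ℝ) * N * wB ≤ wB * ∑' n, transientMass n := by
        rw [mul_comm]
        exact mul_le_mul_of_nonpos_left
          (Real.tsum_le_of_sum_range_le hmass_nonneg hmass_partial) hwB.le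
    _ = ∑' n, wB * transientMass n := tsum_mul_left.symm
    _ ≤ ∑' n, γ ^ n * ((P ^ n) *ᵥ W) t :=
        ((summable_of_sum_range_le hmass_nonneg hmass_partial).mul_left wB).tsum_le_tsum
          hpointwise (summable_geometric_mul_pow_mulVec_of_mem_rowStochastic hP W t hγ0.le hγ1)

theorem transient_utility_lower_bound {S : Type*} [Fintype S] [DecidableEq S]
    (P : Matrix S S ℝ)
    (hnn : ∀ i j, 0 ≤ P i j) (hrow : ∀ i, ∑ j, P i j = 1)
    (R : Finset S)
    (hclosed : ∀ r ∈ R, ∀ t, t ∉ R → P r t = 0)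
    (N : ℝ)
    (hvisit : ∀ t ∉ R, ∀ t' ∉ R, ∀ m : ℕ, ∑ n ∈ Finset.range m, (P ^ n) t t' ≤ N)
    (W : S → ℝ) (wB : ℝ) (hwB : wB < 0)
    (hWT : ∀ t ∉ R, wB ≤ W t) (hWR : ∀ r ∈ R, 0 ≤ W r) :
    ∀ t ∉ R, ∀ γ : ℝ, 0 < γ → γ < 1 →
      ((Rᶜ : Finset S).card : ℝ) * N * wB ≤ ∑' n : ℕ, γ ^ n * ((P ^ n).mulVec W) t :=
  transient_utility_lower_bound_general P hnn hrow R N hvisit W wB hwB hWT hWR
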